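/- For every Γ-semigroup M, the relation 𝒩 = {(a,b) ∈ M × M | N(a) = N(b)} is a semilattice congruence on M. -/
import Mathlib


namespace GammaSemigroup

variable {M G : Type*}

/-- The set product AΓB = {aγb | a ∈ A, γ ∈ Γ, b ∈ B}. -/
def sprod (mul : M → G → M → M) (A B : Set M) : Set M :=
  {c | ∃ a ∈ A, ∃ g : G, ∃ b ∈ B, c = mul a g b}

/-- A nonempty subset A with MΓA ⊆ A. -/
def IsLeftIdeal (mul : M → G → M → M) (A : Set M) : Prop :=
  A.Nonempty ∧ sprod mul Set.univ A ⊆ A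

/-- A nonempty subset A with AΓM ⊆ A. -/
def IsRightIdeal (mul : M → G → M → M) (A : Set M) : Prop :=
  A.Nonempty ∧ sprod mul A Set.univ ⊆ A

/-- An ideal: both a left and a right ideal. -/
def IsIdeal (mul : M → G → M → M) (A : Set M) : Prop :=
  IsLeftIdeal mul A ∧ IsRightIdeal mul A

/-- A nonempty subset A with AΓA ⊆ A. -/
def IsSubsemigroup (mul : M → G → M → M) (A : Set M) : Prop :=
  A.Nonempty ∧ sprod mul A A ⊆ A

/-- A filter: a subsemigroup F such that aγb ∈ F implies a ∈ F and b ∈ F. -/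
def IsFilter (mul : M → G → M → M) (F : Set M) : Prop :=
  IsSubsemigroup mul F ∧ ∀ a b : M, ∀ g : G, mul a g b ∈ F → a ∈ F ∧ b ∈ F

/-- N(x): the filter of M generated by x (intersection of all filters containing x). -/
def filN (mul : M → G → M → M) (x : M) : Set M :=
  ⋂₀ {F : Set M | IsFilter mul F ∧ x ∈ F}

/-- L(a) = {a} ∪ MΓa. -/
def Lgen (mul : M → G → M → M) (a : M) : Set M :=
  {a} ∪ sprod mul Set.univ {a}

/-- R(a) = {a} ∪ aΓM. -/
def Rgen (mul : M → G → M → M) (a : M) : Set M :=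
  {a} ∪ sprod mul {a} Set.univ

/-- I(a) = {a} ∪ MΓa ∪ aΓM ∪ MΓaΓM. -/
def Igen (mul : M → G → M → M) (a : M) : Set M :=
  {a} ∪ sprod mul Set.univ {a} ∪ sprod mul {a} Set.univ ∪
    sprod mul (sprod mul Set.univ {a}) Set.univ

/-- The 𝒩-class of x. -/
def NClass (mul : M → G → M → M) (x : M) : Set M :=
  {y | filN mul y = filN mul x}

/-- A congruence: an equivalence relation compatible with the multiplication on both sides. -/
def IsCongruence (mul : M → G → M → M) (σ : M → M → Prop) : Prop :=
  Equivalence σ ∧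
    ∀ a b c : M, ∀ g : G, σ a b → σ (mul c g a) (mul c g b) ∧ σ (mul a g c) (mul b g c)

/-- A semilattice congruence. -/
def IsSemilatticeCongruence (mul : M → G → M → M) (σ : M → M → Prop) : Prop :=
  IsCongruence mul σ ∧ (∀ a b : M, ∀ g : G, σ (mul a g b) (mul b g a)) ∧
    ∀ a : M, ∀ g : G, σ (mul a g a) a

/-- The σ-class of x. -/
def sigmaClass (σ : M → M → Prop) (x : M) : Set M := {y | σ y x}

/-- A left ideal of the subsemigroup T: a nonempty A ⊆ T with TΓA ⊆ A. -/
def IsLeftIdealOf (mul : M → G → M → M) (T A : Set M) : Prop :=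
  A.Nonempty ∧ A ⊆ T ∧ sprod mul T A ⊆ A

/-- A right ideal of the subsemigroup T: a nonempty A ⊆ T with AΓT ⊆ A. -/
def IsRightIdealOf (mul : M → G → M → M) (T A : Set M) : Prop :=
  A.Nonempty ∧ A ⊆ T ∧ sprod mul A T ⊆ A

/-- T is a left simple subsemigroup: its only left ideal is T itself. -/
def IsLeftSimple (mul : M → G → M → M) (T : Set M) : Prop :=
  IsSubsemigroup mul T ∧ ∀ A : Set M, IsLeftIdealOf mul T A → A = T

/-- T is a right simple subsemigroup: its only right ideal is T itself. -/
def IsRightSimple (mul : M → G → M → M) (T : Set M) : Prop :=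
  IsSubsemigroup mul T ∧ ∀ A : Set M, IsRightIdealOf mul T A → A = T

/-- T is a simple subsemigroup: both left simple and right simple. -/
def IsSimple (mul : M → G → M → M) (T : Set M) : Prop :=
  IsLeftSimple mul T ∧ IsRightSimple mul T

/-- A is semiprime: aγa ∈ A implies a ∈ A. -/
def IsSemiprime (mul : M → G → M → M) (A : Set M) : Prop :=
  ∀ a : M, ∀ g : G, mul a g a ∈ A → a ∈ A

/-- Intra-regular: x ∈ MΓ(xγx)ΓM for all x, γ. -/
def IsIntraRegular (mul : M → G → M → M) : Prop :=
  ∀ x : M, ∀ g : G, x ∈ sprod mul (sprod mul Set.univ {mul x g x}) Set.univ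

/-- Left regular: x ∈ MΓ(xγx) for all x, γ. -/
def IsLeftRegular (mul : M → G → M → M) : Prop :=
  ∀ x : M, ∀ g : G, x ∈ sprod mul Set.univ {mul x g x}

/-- Right regular: x ∈ (xγx)ΓM for all x, γ. -/
def IsRightRegular (mul : M → G → M → M) : Prop :=
  ∀ x : M, ∀ g : G, x ∈ sprod mul {mul x g x} Set.univ

end GammaSemigroup

open GammaSemigroup

lemma filter_mem_mul {M G : Type*} {mul : M → G → M → M} {F : Set M}
    (hF : IsFilter mul F) (a : M) (g : G) (b : M) :
    mul a g b ∈ F ↔ a ∈ F ∧ b ∈ F := by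
  constructor
  · exact hF.2 a b g
  · rintro ⟨ha, hb⟩
    exact hF.1.2 ⟨a, ha, g, b, hb, rfl⟩

lemma mem_filN_self {M G : Type*} (mul : M → G → M → M) (x : M) : x ∈ filN mul x :=
  fun _ hF => hF.2

lemma filN_subset {M G : Type*} {mul : M → G → M → M} {F : Set M} {x : M}
    (hF : IsFilter mul F) (hx : x ∈ F) : filN mul x ⊆ F :=
  Set.sInter_subset_of_mem ⟨hF, hx⟩

lemma mem_of_filN_eq {M G : Type*} {mul : M → G → M → M} {F : Set M} {a b : M}
    (h : filN mul a = filN mul b) (hF : IsFilter mul F) (ha : a ∈ F) : b ∈ F := by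
  have hb : b ∈ filN mul a := h ▸ mem_filN_self mul b
  exact filN_subset hF ha hb

lemma filN_eq_of_iff {M G : Type*} {mul : M → G → M → M} {x y : M}
    (h : ∀ F : Set M, IsFilter mul F → (x ∈ F ↔ y ∈ F)) : filN mul x = filN mul y := by
  have hs : {F : Set M | IsFilter mul F ∧ x ∈ F} = {F : Set M | IsFilter mul F ∧ y ∈ F} :=
    Set.ext fun F => and_congr_right fun hF => h F hF
  unfold filN
  rw [hs]


/-- 𝒩 is a semilattice congruence on M. -/
theorem N_semilattice_congruence {M G : Type*} [Nonempty M] [Nonempty G]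
    (mul : M → G → M → M)
    (hassoc : ∀ a b c : M, ∀ g d : G, mul (mul a g b) d c = mul a g (mul b d c)) :
    IsSemilatticeCongruence mul (fun a b => filN mul a = filN mul b) := by
  refine ⟨⟨⟨fun _ => rfl, Eq.symm, Eq.trans⟩, ?_⟩, ?_, ?_⟩
  · intro a b c g h
    constructor
    · apply filN_eq_of_iff
      intro F hF
      rw [filter_mem_mul hF, filter_mem_mul hF]
      exact and_congr_right fun _ =>
        ⟨mem_of_filN_eq h hF, mem_of_filN_eq h.symm hF⟩
    · apply filN_eq_of_iff
      intro F hF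
      rw [filter_mem_mul hF, filter_mem_mul hF]
      exact and_congr_left fun _ =>
        ⟨mem_of_filN_eq h hF, mem_of_filN_eq h.symm hF⟩
  · intro a b g
    apply filN_eq_of_iff
    intro F hF
    rw [filter_mem_mul hF, filter_mem_mul hF, and_comm]
  · intro a g
    apply filN_eq_of_iff
    intro F hF
    rw [filter_mem_mul hF, and_self]
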